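/- arXiv:1508.06908 — 3 statements merged into one kernel-verified Lean document; each statement's English description precedes it below -/
import Mathlib

section
/- Let N ≥ 1 and let A be a symmetric real N×N matrix. Then there exists an orthonormal basis v_1, …, v_N of ℝ^N consisting of isotropic vectors for A (i.e. ⟨A v_i, v_i⟩ = 0 for all i) if and only if tr A = 0. -/
/-!
Over any orthonormal basis the numbers `⟪T bᵢ, bᵢ⟫` sum to `tr T`, which gives one direction.
Conversely, if `tr T = 0` then some `⟪T bᵢ, bᵢ⟫` is `≤ 0` and some `⟪T bⱼ, bⱼ⟫` is `≥ 0`, and the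
intermediate value theorem along the segment from `bᵢ` to `bⱼ` produces an isotropic unit vector
`v`. The compression of `T` to `vᗮ` has trace `tr T - ⟪T v, v⟫ = 0`, so induction on the dimension
gives an isotropic orthonormal basis of `vᗮ`, which `v` completes.
-/

open scoped InnerProductSpace RealInnerProductSpace
open Module

namespace OrthonormalBasis

variable {𝕜 E : Type*} [RCLike 𝕜] [NormedAddCommGroup E] [InnerProductSpace 𝕜 E]
  [FiniteDimensional 𝕜 E]

theorem exists_coe_eq_vecCons {v : E} (hv : ‖v‖ = 1) {n : ℕ}
    (w : OrthonormalBasis (Fin n) 𝕜 (𝕜 ∙ v)ᗮ) :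
    ∃ b : OrthonormalBasis (Fin (n + 1)) 𝕜 E, ⇑b = Matrix.vecCons v fun i => (w i : E) := by
  have hon : Orthonormal 𝕜 (Matrix.vecCons v fun i => (w i : E)) :=
    orthonormal_vecCons_iff.2 ⟨hv,
      fun i => Submodule.mem_orthogonal_singleton_iff_inner_right.1 (w i).2,
      w.orthonormal.comp_linearIsometry (𝕜 ∙ v)ᗮ.subtypeₗᵢ⟩
  have hcard : Fintype.card (Fin (n + 1)) = finrank 𝕜 E := by
    rw [← (𝕜 ∙ v).finrank_add_finrank_orthogonal,
      finrank_span_singleton (norm_ne_zero_iff.1 (hv ▸ one_ne_zero)),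
      finrank_eq_card_basis w.toBasis]
    simp [add_comm]
  exact ⟨(basisOfOrthonormalOfCardEqFinrank hon hcard).toOrthonormalBasis
    (by rwa [coe_basisOfOrthonormalOfCardEqFinrank]), by simp⟩

end OrthonormalBasis

namespace LinearMap

section compression

variable {𝕜 E : Type*} [RCLike 𝕜] [NormedAddCommGroup E] [InnerProductSpace 𝕜 E]

noncomputable def compression (K : Submodule 𝕜 E) [K.HasOrthogonalProjection] (T : E →ₗ[𝕜] E) :
    K →ₗ[𝕜] K :=
  K.orthogonalProjectionOnto.toLinearMap ∘ₗ T ∘ₗ K.subtype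

theorem inner_compression_apply (K : Submodule 𝕜 E) [K.HasOrthogonalProjection]
    (T : E →ₗ[𝕜] E) (x y : K) : ⟪compression K T x, y⟫_𝕜 = ⟪T x, y⟫_𝕜 := by
  simp [compression]

theorem inner_apply_compression (K : Submodule 𝕜 E) [K.HasOrthogonalProjection]
    (T : E →ₗ[𝕜] E) (x y : K) : ⟪x, compression K T y⟫_𝕜 = ⟪(x : E), T y⟫_𝕜 := by
  rw [← inner_conj_symm, inner_compression_apply, inner_conj_symm]

theorem trace_compression_orthogonal_span_singleton [FiniteDimensional 𝕜 E] {v : E}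
    (hv : ‖v‖ = 1) (T : E →ₗ[𝕜] E) :
    trace 𝕜 _ (compression (𝕜 ∙ v)ᗮ T) = trace 𝕜 E T - ⟪v, T v⟫_𝕜 := by
  let w := stdOrthonormalBasis 𝕜 (𝕜 ∙ v)ᗮ
  obtain ⟨b, hb⟩ := OrthonormalBasis.exists_coe_eq_vecCons hv w
  rw [trace_eq_sum_inner _ w, trace_eq_sum_inner T b, Fin.sum_univ_succ, hb]
  simp only [Matrix.cons_val_zero, Matrix.cons_val_succ, inner_apply_compression]
  ring

end compression

variable {E : Type*} [NormedAddCommGroup E] [InnerProductSpace ℝ E]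

theorem exists_ne_zero_inner_map_self_eq_zero (T : E →ₗ[ℝ] E) {x y : E}
    (hxy : LinearIndependent ℝ ![x, y]) (hx : ⟪T x, x⟫ ≤ 0) (hy : 0 ≤ ⟪T y, y⟫) :
    ∃ w ≠ 0, ⟪T w, w⟫ = 0 := by
  let γ : ℝ → E := fun t => (1 - t) • x + t • y
  have hγ : Continuous fun t => ⟪T (γ t), γ t⟫ := by
    simp only [γ, map_add, map_smul]
    fun_prop
  obtain ⟨t, -, ht⟩ :=
    intermediate_value_Icc zero_le_one hγ.continuousOn ⟨by simpa [γ], by simpa [γ]⟩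
  refine ⟨γ t, fun h => ?_, ht⟩
  obtain ⟨h₁, h₂⟩ := LinearIndependent.pair_iff.1 hxy _ _ h
  linarith

theorem exists_norm_eq_one_inner_map_self_eq_zero [FiniteDimensional ℝ E] [Nontrivial E]
    {T : E →ₗ[ℝ] E} (hT : trace ℝ E T = 0) : ∃ v, ‖v‖ = 1 ∧ ⟪T v, v⟫ = 0 := by
  let b := stdOrthonormalBasis ℝ E
  have hsum : ∑ i, ⟪T (b i), b i⟫ = 0 := by
    simpa [trace_eq_sum_inner T b, real_inner_comm] using hT
  have hne : (Finset.univ : Finset (Fin (finrank ℝ E))).Nonempty := by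
    simp [Fin.pos_iff_nonempty.symm, finrank_pos]
  obtain ⟨i, -, hi⟩ := Finset.exists_le_of_sum_le hne (hsum.trans Finset.sum_const_zero.symm).le
  obtain ⟨j, -, hj⟩ := Finset.exists_le_of_sum_le hne (hsum.trans Finset.sum_const_zero.symm).ge
  obtain ⟨w, hw, hTw⟩ : ∃ w ≠ 0, ⟪T w, w⟫ = 0 := by
    by_cases hij : i = j
    · exact ⟨b i, b.orthonormal.ne_zero i, le_antisymm hi (hij ▸ hj)⟩
    · have hpair : LinearIndependent ℝ ![b i, b j] := by
        have h := b.orthonormal.linearIndependent.comp ![i, j] (by simp [hij])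
        rwa [show b ∘ ![i, j] = ![b i, b j] by ext k; fin_cases k <;> rfl] at h
      exact exists_ne_zero_inner_map_self_eq_zero T hpair hi hj
  refine ⟨‖w‖⁻¹ • w, norm_smul_inv_norm hw, ?_⟩
  rw [map_smul, real_inner_smul_left, real_inner_smul_right, hTw, mul_zero, mul_zero]

theorem exists_orthonormalBasis_inner_map_self_eq_zero_of_trace_eq_zero [FiniteDimensional ℝ E]
    {n : ℕ} (hn : finrank ℝ E = n) {T : E →ₗ[ℝ] E} (hT : trace ℝ E T = 0) :
    ∃ b : OrthonormalBasis (Fin n) ℝ E, ∀ i, ⟪T (b i), b i⟫ = 0 := by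
  induction n generalizing E with
  | zero => exact ⟨(stdOrthonormalBasis ℝ E).reindex (finCongr hn), fun i => i.elim0⟩
  | succ n ih =>
    have : Nontrivial E := nontrivial_of_finrank_eq_succ hn
    obtain ⟨v, hv, hTv⟩ := exists_norm_eq_one_inner_map_self_eq_zero hT
    have hK : finrank ℝ (ℝ ∙ v)ᗮ = n := by
      have := (ℝ ∙ v).finrank_add_finrank_orthogonal
      rw [finrank_span_singleton (norm_ne_zero_iff.1 (hv ▸ one_ne_zero)), hn] at this
      omega
    have hS : trace ℝ _ (compression (ℝ ∙ v)ᗮ T) = 0 := by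
      rw [trace_compression_orthogonal_span_singleton hv, hT, real_inner_comm, hTv, sub_zero]
    obtain ⟨w, hw⟩ := ih hK hS
    obtain ⟨b, hb⟩ := OrthonormalBasis.exists_coe_eq_vecCons hv w
    refine ⟨b, Fin.cases ?_ fun i => ?_⟩
    · simpa [hb] using hTv
    · rw [hb, Matrix.cons_val_succ, ← inner_compression_apply]
      exact hw i

theorem exists_orthonormalBasis_inner_map_self_eq_zero_iff [FiniteDimensional ℝ E] {n : ℕ}
    (hn : finrank ℝ E = n) (T : E →ₗ[ℝ] E) :
    (∃ b : OrthonormalBasis (Fin n) ℝ E, ∀ i, ⟪T (b i), b i⟫ = 0) ↔ trace ℝ E T = 0 := by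
  refine ⟨fun ⟨b, hb⟩ => ?_, exists_orthonormalBasis_inner_map_self_eq_zero_of_trace_eq_zero hn⟩
  rw [trace_eq_sum_inner T b]
  exact Finset.sum_eq_zero fun i _ => by rw [real_inner_comm, hb]

end LinearMap

theorem exists_isotropic_orthonormal_basis_iff_trace_eq_zero_general
    (N : ℕ) (A : Matrix (Fin N) (Fin N) ℝ) :
    (∃ b : OrthonormalBasis (Fin N) ℝ (EuclideanSpace ℝ (Fin N)),
        ∀ i : Fin N, ⟪Matrix.toEuclideanLin A (b i), b i⟫ = 0) ↔ A.trace = 0 := by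
  rw [LinearMap.exists_orthonormalBasis_inner_map_self_eq_zero_iff finrank_euclideanSpace_fin,
    Matrix.toEuclideanLin_eq_toLin_orthonormal, Matrix.trace_toLin_eq]

/-- For `N ≥ 1` and a symmetric real `N×N` matrix `A`, there is an orthonormal basis of
`ℝ^N` consisting of isotropic vectors for `A` iff `tr A = 0`. -/
theorem exists_isotropic_orthonormal_basis_iff_trace_eq_zero
    (N : ℕ) (hN : 1 ≤ N) (A : Matrix (Fin N) (Fin N) ℝ) (hA : A.IsSymm) :
    (∃ b : OrthonormalBasis (Fin N) ℝ (EuclideanSpace ℝ (Fin N)),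
        ∀ i : Fin N, ⟪Matrix.toEuclideanLin A (b i), b i⟫ = 0) ↔ A.trace = 0 :=
  exists_isotropic_orthonormal_basis_iff_trace_eq_zero_general N A
end

section
/- Let A be a symmetric real N×N matrix, and let v₁ be a unit vector lying in the orthogonal complement (ker A)^⊥ of the kernel of A and satisfying ⟨A v₁, v₁⟩ = 0. Set A₁ := A − v₁ ⊗ (A v₁) − (A v₁) ⊗ v₁, and let V := (span(ker A ∪ {v₁}))^⊥ be the orthogonal complement of the linear span of ker A together with v₁. Then V is invariant under A₁, i.e. A₁ v ∈ V for every v ∈ V. -/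
/-!
For `v` orthogonal to `ker A` and to `v₁` one has `A₁ v = A v - ⟪A v₁, v⟫ • v₁`. Both terms are
orthogonal to `ker A`, since the range of a symmetric operator lies in `(ker A)ᗮ`, and the inner
product with `v₁` is `⟪A v₁, v⟫ (1 - ‖v₁‖²) = 0`.
-/

open scoped RealInnerProductSpace

open InnerProductSpace LinearMap Submodule

section

variable {𝕜 E : Type*} [RCLike 𝕜] [NormedAddCommGroup E] [InnerProductSpace 𝕜 E]

theorem Submodule.mem_orthogonal_sup_span_singleton_iff {K : Submodule 𝕜 E} {u x : E} :
    x ∈ (K ⊔ span 𝕜 {u})ᗮ ↔ x ∈ Kᗮ ∧ inner 𝕜 u x = 0 := by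
  rw [← inf_orthogonal, mem_inf, mem_orthogonal_singleton_iff_inner_right]

theorem LinearMap.IsSymmetric.apply_mem_orthogonal_ker {T : E →ₗ[𝕜] E} (hT : T.IsSymmetric)
    (x : E) : T x ∈ (ker T)ᗮ := by
  rw [← hT.orthogonal_range]
  exact le_orthogonal_orthogonal _ (mem_range_self T x)

theorem LinearMap.IsSymmetric.sub_rankOne_sub_rankOne_mem_orthogonal_ker_sup_span
    {T : E →ₗ[𝕜] E} (hT : T.IsSymmetric) {u : E} (hu : ‖u‖ = 1) (hu_ker : u ∈ (ker T)ᗮ) :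
    ∀ v ∈ (ker T ⊔ span 𝕜 {u})ᗮ,
      (T - (rankOne 𝕜 u (T u)).toLinearMap - (rankOne 𝕜 (T u) u).toLinearMap) v
        ∈ (ker T ⊔ span 𝕜 {u})ᗮ := by
  intro v hv
  rw [mem_orthogonal_sup_span_singleton_iff] at hv ⊢
  obtain ⟨-, hv_u⟩ := hv
  simp only [sub_apply, ContinuousLinearMap.coe_coe, rankOne_apply, hv_u, zero_smul, sub_zero]
  refine ⟨sub_mem (hT.apply_mem_orthogonal_ker v) (smul_mem _ _ hu_ker), ?_⟩
  rw [inner_sub_right, inner_smul_right, inner_self_eq_norm_sq_to_K, hu, hT]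
  simp

end

theorem Matrix.toEuclideanLin_vecMulVec {ι : Type*} [Fintype ι] [DecidableEq ι]
    (x y : EuclideanSpace ℝ ι) :
    toEuclideanLin (vecMulVec x y) = (rankOne ℝ x y).toLinearMap := by
  rw [← LinearEquiv.eq_symm_apply, symm_toEuclideanLin_rankOne, star_trivial]

theorem reduced_matrix_invariant_subspace_general
    (N : ℕ) (A : Matrix (Fin N) (Fin N) ℝ) (hA : A.IsSymm)
    (v₁ : EuclideanSpace ℝ (Fin N)) (hv₁ : ‖v₁‖ = 1)
    (hv₁mem : v₁ ∈ (LinearMap.ker (Matrix.toEuclideanLin A))ᗮ) :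
    ∀ v ∈ (LinearMap.ker (Matrix.toEuclideanLin A) ⊔ Submodule.span ℝ {v₁})ᗮ,
      Matrix.toEuclideanLin
          (A - Matrix.vecMulVec v₁ (A.mulVec v₁) - Matrix.vecMulVec (A.mulVec v₁) v₁) v
        ∈ (LinearMap.ker (Matrix.toEuclideanLin A) ⊔ Submodule.span ℝ {v₁})ᗮ := by
  have hT : (Matrix.toEuclideanLin A).IsSymmetric :=
    Matrix.isSymmetric_toEuclideanLin_iff.mpr (Matrix.isHermitian_iff_isSymm.mpr hA)
  have h := hT.sub_rankOne_sub_rankOne_mem_orthogonal_ker_sup_span hv₁ hv₁mem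
  rwa [← Matrix.toEuclideanLin_vecMulVec, ← Matrix.toEuclideanLin_vecMulVec, ← map_sub,
    ← map_sub] at h

/-- If `v₁ ∈ (ker A)ᗮ` is a unit isotropic vector for the symmetric matrix `A`,
`A₁ = A − v₁ ⊗ (A v₁) − (A v₁) ⊗ v₁`, and `V = (span(ker A ∪ {v₁}))ᗮ`, then `V` is
invariant under `A₁`. -/
theorem reduced_matrix_invariant_subspace
    (N : ℕ) (A : Matrix (Fin N) (Fin N) ℝ) (hA : A.IsSymm)
    (v₁ : EuclideanSpace ℝ (Fin N)) (hv₁ : ‖v₁‖ = 1)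
    (hv₁mem : v₁ ∈ (LinearMap.ker (Matrix.toEuclideanLin A))ᗮ)
    (hiso : ⟪Matrix.toEuclideanLin A v₁, v₁⟫ = 0) :
    ∀ v ∈ (LinearMap.ker (Matrix.toEuclideanLin A) ⊔ Submodule.span ℝ {v₁})ᗮ,
      Matrix.toEuclideanLin
          (A - Matrix.vecMulVec v₁ (A.mulVec v₁) - Matrix.vecMulVec (A.mulVec v₁) v₁) v
        ∈ (LinearMap.ker (Matrix.toEuclideanLin A) ⊔ Submodule.span ℝ {v₁})ᗮ :=
  reduced_matrix_invariant_subspace_general N A hA v₁ hv₁ hv₁mem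
end

section
/- Let N ≥ 1 and let M be any real N×N matrix. Then there exists an orthonormal basis v_1, …, v_N of ℝ^N such that ⟨M v_i, v_i⟩ = (tr M)/N for every i = 1, …, N; in particular, Σ_{i=1}^N |⟨M v_i, v_i⟩| = |tr M| for this basis. -/
/-!
In any orthonormal basis the diagonal entries `⟪bᵢ, T bᵢ⟫` of an operator `T` on an
`n`-dimensional real inner product space average to `tr T / n`. So the continuous function
`x ↦ ⟪x, T x⟫` takes values on both sides of `tr T / n` on the unit sphere, which is connected
once `n ≥ 2`, and some unit vector `v` attains it. The compression of `T` to `v^⊥` then has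
trace `(n - 1) · tr T / n`, and induction on the dimension completes `v` to the required basis.
-/

open scoped RealInnerProductSpace
open Module

section
variable {𝕜 E : Type*} [RCLike 𝕜] [NormedAddCommGroup E] [InnerProductSpace 𝕜 E]
open scoped InnerProductSpace

theorem Matrix.trace_toEuclideanLin {n : Type*} [Fintype n] [DecidableEq n] (A : Matrix n n 𝕜) :
    (Matrix.toEuclideanLin A).trace 𝕜 _ = A.trace := by
  rw [Matrix.toEuclideanLin_eq_toLin_orthonormal,
    LinearMap.trace_eq_matrix_trace 𝕜 (EuclideanSpace.basisFun n 𝕜).toBasis,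
    LinearMap.toMatrix_toLin]

noncomputable def LinearMap.compression_s10 (T : E →ₗ[𝕜] E) (K : Submodule 𝕜 E)
    [K.HasOrthogonalProjection] : K →ₗ[𝕜] K :=
  K.orthogonalProjectionOnto.toLinearMap ∘ₗ T ∘ₗ K.subtype

theorem LinearMap.inner_compression_apply_s10 (T : E →ₗ[𝕜] E) (K : Submodule 𝕜 E)
    [K.HasOrthogonalProjection] (x y : K) :
    ⟪x, T.compression_s10 K y⟫_𝕜 = ⟪(x : E), T y⟫_𝕜 :=
  Submodule.inner_orthogonalProjectionOnto_eq_of_mem_left x (T y)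

theorem Orthonormal.cons {n : ℕ} {v : E} (hv : ‖v‖ = 1) {w : Fin n → E}
    (hw : Orthonormal 𝕜 w) (hvw : ∀ i, ⟪v, w i⟫_𝕜 = 0) :
    Orthonormal 𝕜 (Fin.cons v w : Fin (n + 1) → E) := by
  classical
  rw [orthonormal_iff_ite] at hw ⊢
  intro i j
  cases i using Fin.cases <;> cases j using Fin.cases
  · simp [inner_self_eq_norm_sq_to_K, hv]
  · simp [hvw, (Fin.succ_ne_zero _).symm]
  · simp [inner_eq_zero_symm.1 (hvw _), Fin.succ_ne_zero]
  · simp [hw]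

theorem OrthonormalBasis.exists_eq_cons_of_orthogonal_span_singleton [FiniteDimensional 𝕜 E]
    {n : ℕ} {v : E} (hv : ‖v‖ = 1) (b' : OrthonormalBasis (Fin n) 𝕜 (𝕜 ∙ v)ᗮ) :
    ∃ b : OrthonormalBasis (Fin (n + 1)) 𝕜 E, ⇑b = Fin.cons v fun i => (b' i : E) := by
  have hon : Orthonormal 𝕜 (Fin.cons v fun i => (b' i : E) : Fin (n + 1) → E) :=
    .cons hv (b'.orthonormal.comp_linearIsometry (𝕜 ∙ v)ᗮ.subtypeₗᵢ) fun i =>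
      Submodule.inner_right_of_mem_orthogonal (Submodule.mem_span_singleton_self v) (b' i).2
  have hcard : Fintype.card (Fin (n + 1)) = finrank 𝕜 E := by
    have hv0 : v ≠ 0 := by rintro rfl; simp at hv
    rw [← (𝕜 ∙ v).finrank_add_finrank_orthogonal, finrank_span_singleton hv0,
      finrank_eq_card_basis b'.toBasis]
    simp [add_comm]
  exact ⟨(basisOfOrthonormalOfCardEqFinrank hon hcard).toOrthonormalBasis
    (by rwa [coe_basisOfOrthonormalOfCardEqFinrank]), by simp⟩

end

variable {E : Type*} [NormedAddCommGroup E] [InnerProductSpace ℝ E] [FiniteDimensional ℝ E]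

theorem LinearMap.exists_norm_eq_one_inner_apply_eq_trace_div_finrank [Nontrivial E]
    (T : E →ₗ[ℝ] E) :
    ∃ v : E, ‖v‖ = 1 ∧ ⟪v, T v⟫ = T.trace ℝ E / finrank ℝ E := by
  set μ := T.trace ℝ E / finrank ℝ E
  have : NeZero (finrank ℝ E) := ⟨Module.finrank_pos.ne'⟩
  let b := stdOrthonormalBasis ℝ E
  have hsum : ∑ i, ⟪b i, T (b i)⟫ = ∑ _i : Fin (finrank ℝ E), μ := by
    rw [← T.trace_eq_sum_inner b, Finset.sum_const, Finset.card_univ, Fintype.card_fin,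
      nsmul_eq_mul, mul_div_cancel₀ _ (NeZero.ne _)]
  obtain ⟨i, -, hi⟩ := Finset.exists_le_of_sum_le Finset.univ_nonempty hsum.le
  obtain ⟨j, -, hj⟩ := Finset.exists_le_of_sum_le Finset.univ_nonempty hsum.ge
  rcases eq_or_ne i j with rfl | hij
  · exact ⟨b i, b.orthonormal.1 i, le_antisymm hi hj⟩
  have hrank : 1 < Module.rank ℝ E :=
    one_lt_rank_of_one_lt_finrank <|
      Fintype.card_fin (finrank ℝ E) ▸ Fintype.one_lt_card_iff.2 ⟨i, j, hij⟩
  have hcont : Continuous fun v : E => ⟪v, T v⟫ := by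
    have := T.continuous_of_finiteDimensional
    fun_prop
  obtain ⟨v, hv, hvμ⟩ :=
    (isConnected_sphere hrank 0 zero_le_one).isPreconnected.intermediate_value
      (mem_sphere_zero_iff_norm.2 (b.orthonormal.1 i))
      (mem_sphere_zero_iff_norm.2 (b.orthonormal.1 j)) hcont.continuousOn ⟨hi, hj⟩
  exact ⟨v, mem_sphere_zero_iff_norm.1 hv, hvμ⟩

theorem LinearMap.exists_orthonormalBasis_inner_apply_eq_trace_div {n : ℕ}
    (hn : finrank ℝ E = n) (T : E →ₗ[ℝ] E) :
    ∃ b : OrthonormalBasis (Fin n) ℝ E, ∀ i, ⟪b i, T (b i)⟫ = T.trace ℝ E / n := by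
  induction n generalizing E with
  | zero => exact ⟨(stdOrthonormalBasis ℝ E).reindex (finCongr hn), fun i => i.elim0⟩
  | succ n ih =>
    have : Nontrivial E := Module.nontrivial_of_finrank_eq_succ hn
    obtain ⟨v, hv, hvT⟩ := T.exists_norm_eq_one_inner_apply_eq_trace_div_finrank
    have : Fact (finrank ℝ E = n + 1) := ⟨hn⟩
    have hK : finrank ℝ (ℝ ∙ v)ᗮ = n :=
      Submodule.finrank_orthogonal_span_singleton (ne_zero_of_norm_ne_zero (hv ▸ one_ne_zero))
    obtain ⟨b', hb'⟩ := ih hK (T.compression_s10 (ℝ ∙ v)ᗮ)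
    obtain ⟨b, hb⟩ := OrthonormalBasis.exists_eq_cons_of_orthogonal_span_singleton hv b'
    have htrace : T.trace ℝ E = ⟪v, T v⟫ + (T.compression_s10 (ℝ ∙ v)ᗮ).trace ℝ _ := by
      rw [T.trace_eq_sum_inner b, Fin.sum_univ_succ, LinearMap.trace_eq_sum_inner _ b']
      simp only [hb, Fin.cons_zero, Fin.cons_succ, LinearMap.inner_compression_apply_s10]
    rw [hn] at hvT
    refine ⟨b, Fin.cases ?_ fun j => ?_⟩
    · simpa [hb] using hvT
    · have hn0 : (n : ℝ) ≠ 0 := Nat.cast_ne_zero.2 (Fin.pos j).ne'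
      rw [hb, Fin.cons_succ, ← LinearMap.inner_compression_apply_s10, hb' j,
        div_eq_div_iff hn0 (by positivity)]
      rw [hvT] at htrace
      push_cast at htrace ⊢
      field_simp at htrace
      linear_combination -htrace

theorem exists_orthonormal_basis_equidistributing_trace_general
    (N : ℕ) (M : Matrix (Fin N) (Fin N) ℝ) :
    ∃ b : OrthonormalBasis (Fin N) ℝ (EuclideanSpace ℝ (Fin N)),
      (∀ i : Fin N, ⟪Matrix.toEuclideanLin M (b i), b i⟫ = M.trace / N) ∧
      ∑ i : Fin N, |⟪Matrix.toEuclideanLin M (b i), b i⟫| = |M.trace| := by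
  obtain ⟨b, hb⟩ := (Matrix.toEuclideanLin M).exists_orthonormalBasis_inner_apply_eq_trace_div
    finrank_euclideanSpace_fin
  have hdiag (i : Fin N) : ⟪Matrix.toEuclideanLin M (b i), b i⟫ = M.trace / N := by
    rw [real_inner_comm, hb, Matrix.trace_toEuclideanLin]
  refine ⟨b, hdiag, ?_⟩
  calc ∑ i, |⟪Matrix.toEuclideanLin M (b i), b i⟫|
      = |∑ i, ⟪Matrix.toEuclideanLin M (b i), b i⟫| := by
        simp only [hdiag, Finset.sum_const, abs_nsmul]
    _ = |M.trace| := by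
        simp_rw [← Matrix.trace_toEuclideanLin, LinearMap.trace_eq_sum_inner _ b, real_inner_comm]

/-- For any real `N×N` matrix `M` (`N ≥ 1`) there is an orthonormal basis `v₁, …, v_N` of
`ℝ^N` with `⟨M vᵢ, vᵢ⟩ = (tr M)/N` for all `i`; in particular
`Σᵢ |⟨M vᵢ, vᵢ⟩| = |tr M|` for this basis. -/
theorem exists_orthonormal_basis_equidistributing_trace
    (N : ℕ) (hN : 1 ≤ N) (M : Matrix (Fin N) (Fin N) ℝ) :
    ∃ b : OrthonormalBasis (Fin N) ℝ (EuclideanSpace ℝ (Fin N)),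
      (∀ i : Fin N, ⟪Matrix.toEuclideanLin M (b i), b i⟫ = M.trace / N) ∧
      ∑ i : Fin N, |⟪Matrix.toEuclideanLin M (b i), b i⟫| = |M.trace| :=
  exists_orthonormal_basis_equidistributing_trace_general N M
end
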